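/- If (X,A) admits a representation as an NDR-pair via maps u : X → [0,1] and h : X × [0,1] → X with u⁻¹(1) = A, h_t restricted to A equal to the identity, h₀ = id, and h₁(u⁻¹((0,1])) ⊆ A, then the inclusion A ↪ X is a cofibration (has the homotopy extension property). -/

import Mathlib

/-!
Steenrod's formula. Put `v = 1 - u`, which vanishes exactly on `A`. For `t ≤ v x` run the
deformation `h` from `x` at speed `1 / v x` and apply `f`; for `t > v x` we have `v x < 1`, so
`h (x, 1) ∈ A`, and we follow `K` from there for the remaining time `t - v x`. The two pieces meet
at `t = v x` because `K (·, 0) = f`. The first piece is continuous even where `v` vanishes: there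
`x ∈ A` is fixed by `h`, so the speed does not matter (a tube-lemma argument over the compact
interval).
-/

open unitInterval Set Filter Topology

section

variable {α X T Z : Type*} [TopologicalSpace X] [TopologicalSpace T] [TopologicalSpace Z]
  [CompactSpace T]

theorem tendsto_apply_of_forall_apply_eq {h : X × T → Z} (hh : Continuous h) {x₀ : X} {z₀ : Z}
    (hx₀ : ∀ t, h (x₀, t) = z₀) {l : Filter α} {φ : α → X} (hφ : Tendsto φ l (𝓝 x₀))
    (θ : α → T) : Tendsto (fun a => h (φ a, θ a)) l (𝓝 z₀) := by
  intro N hN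
  have hnear : ∀ᶠ x in 𝓝 x₀, ∀ t ∈ (univ : Set T), h (x, t) ∈ N :=
    isCompact_univ.eventually_forall_of_forall_eventually fun t _ =>
      (hh.continuousAt (x := (x₀, t))).preimage_mem_nhds (by rwa [hx₀])
  exact (hφ.eventually hnear).mono fun a ha => ha (θ a) trivial

end

structure IsNDRPair {X : Type*} [TopologicalSpace X] (A : Set X) (u : C(X, I)) (h : C(X × I, X)) :
    Prop where
  preimage_one : u ⁻¹' {1} = A
  apply_of_mem : ∀ a ∈ A, ∀ t : I, h (a, t) = a
  apply_zero : ∀ x : X, h (x, 0) = x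
  apply_one_mem : ∀ x : X, (0 : ℝ) < (u x : ℝ) → h (x, 1) ∈ A

section

variable {X Y : Type*} {A : Set X}

open Classical in
noncomputable def piecewiseHomotopy (A : Set X) (f : X → Y) (K : A × I → Y) (p : X × I) : Y :=
  if hx : p.1 ∈ A then K (⟨p.1, hx⟩, p.2) else f p.1

theorem piecewiseHomotopy_of_mem (f : X → Y) (K : A × I → Y) (a : A) (t : I) :
    piecewiseHomotopy A f K (a, t) = K (a, t) :=
  dif_pos a.2

theorem piecewiseHomotopy_zero {f : X → Y} {K : A × I → Y} (hK0 : ∀ a : A, K (a, 0) = f a)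
    (x : X) : piecewiseHomotopy A f K (x, 0) = f x := by
  by_cases hx : x ∈ A
  · exact (piecewiseHomotopy_of_mem f K ⟨x, hx⟩ 0).trans (hK0 _)
  · exact dif_neg hx

theorem continuousOn_piecewiseHomotopy [TopologicalSpace X] [TopologicalSpace Y] (f : X → Y)
    {K : A × I → Y} (hK : Continuous K) :
    ContinuousOn (piecewiseHomotopy A f K) (A ×ˢ univ) := by
  rw [continuousOn_iff_continuous_domRestrict]
  have hpair : Continuous fun p : ↥(A ×ˢ (univ : Set I)) => ((⟨p.1.1, p.2.1⟩, p.1.2) : A × I) :=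
    (continuous_subtype_val.fst.subtype_mk _).prodMk continuous_subtype_val.snd
  convert hK.comp hpair using 1
  funext p
  exact piecewiseHomotopy_of_mem f K ⟨p.1.1, p.2.1⟩ p.1.2

variable [TopologicalSpace X]

noncomputable def ndrDeformation (u : C(X, I)) (h : C(X × I, X)) (p : X × I) : X :=
  h (p.1, projIcc 0 1 zero_le_one ((p.2 : ℝ) / σ (u p.1)))

noncomputable def ndrExtension (u : C(X, I)) (h : C(X × I, X)) (f : X → Y) (K : A × I → Y)
    (p : X × I) : Y :=
  if p.2 ≤ σ (u p.1) then f (ndrDeformation u h p)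
  else piecewiseHomotopy A f K (h (p.1, 1), projIcc 0 1 zero_le_one ((p.2 : ℝ) - σ (u p.1)))

namespace IsNDRPair

variable {u : C(X, I)} {h : C(X × I, X)}

theorem symm_eq_zero_iff (hN : IsNDRPair A u h) {x : X} : σ (u x) = 0 ↔ x ∈ A := by
  rw [symm_eq_zero, ← hN.preimage_one, mem_preimage, mem_singleton_iff]

theorem coe_symm_ne_zero (hN : IsNDRPair A u h) {x : X} (hx : x ∉ A) : (σ (u x) : ℝ) ≠ 0 :=
  coe_ne_zero.2 (hN.symm_eq_zero_iff.not.2 hx)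

theorem isClosed (hN : IsNDRPair A u h) : IsClosed A :=
  hN.preimage_one ▸ isClosed_singleton.preimage u.continuous

theorem continuous_ndrDeformation (hN : IsNDRPair A u h) : Continuous (ndrDeformation u h) := by
  refine continuous_iff_continuousAt.2 fun p => ?_
  by_cases hp : p.1 ∈ A
  · show Tendsto _ _ (𝓝 (h (p.1, _)))
    rw [hN.apply_of_mem _ hp]
    exact tendsto_apply_of_forall_apply_eq h.continuous (hN.apply_of_mem _ hp)
      continuousAt_fst _
  · refine h.continuous.continuousAt.comp (continuousAt_fst.prodMk ?_)
    exact continuous_projIcc.continuousAt.comp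
      ((continuous_subtype_val.comp continuous_snd).continuousAt.div (by fun_prop)
        (hN.coe_symm_ne_zero hp))

theorem ndrDeformation_symm (hN : IsNDRPair A u h) (x : X) :
    ndrDeformation u h (x, σ (u x)) = h (x, 1) := by
  by_cases hx : x ∈ A
  · rw [ndrDeformation, hN.apply_of_mem x hx, hN.apply_of_mem x hx]
  · rw [ndrDeformation, div_self (hN.coe_symm_ne_zero hx), projIcc_right, Icc.mk_one]

theorem continuous_ndrExtension [TopologicalSpace Y] (hN : IsNDRPair A u h) {f : X → Y}
    {K : A × I → Y} (hf : Continuous f) (hK : Continuous K) (hK0 : ∀ a : A, K (a, 0) = f a) :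
    Continuous (ndrExtension u h f K) := by
  have hv : Continuous fun p : X × I => σ (u p.1) := by fun_prop
  have hlate : closure {p : X × I | ¬p.2 ≤ σ (u p.1)} ⊆ {p | h (p.1, 1) ∈ A} := by
    refine closure_minimal (fun p hp => hN.apply_one_mem _ ?_)
      (hN.isClosed.preimage (by fun_prop))
    have ht : (p.2 : ℝ) ≤ 1 := p.2.2.2
    rw [mem_ofPred_eq, not_le, ← Subtype.coe_lt_coe, coe_symm_eq] at hp
    linarith
  refine continuous_if (fun p hp => ?_) (hf.comp hN.continuous_ndrDeformation).continuousOn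
    ((continuousOn_piecewiseHomotopy f hK).comp (by fun_prop) fun p hp => ⟨hlate hp, trivial⟩)
  obtain ⟨x, t⟩ := p
  obtain rfl : t = σ (u x) := frontier_le_subset_eq continuous_snd hv hp
  dsimp only
  rw [hN.ndrDeformation_symm, sub_self, projIcc_left, Icc.mk_zero,
    piecewiseHomotopy_zero hK0]

theorem ndrExtension_zero (hN : IsNDRPair A u h) (f : X → Y) (K : A × I → Y) (x : X) :
    ndrExtension u h f K (x, 0) = f x := by
  simp [ndrExtension, ndrDeformation, hN.apply_zero]

theorem ndrExtension_of_mem (hN : IsNDRPair A u h) {f : X → Y} {K : A × I → Y}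
    (hK0 : ∀ a : A, K (a, 0) = f a) (a : A) (t : I) :
    ndrExtension u h f K (a, t) = K (a, t) := by
  have hva : σ (u a) = 0 := hN.symm_eq_zero_iff.2 a.2
  rcases eq_or_ne t 0 with rfl | ht
  · simp [ndrExtension, ndrDeformation, hN.apply_of_mem _ a.2, hK0]
  · simp [ndrExtension, hva, hN.apply_of_mem _ a.2, ht, projIcc_of_mem, piecewiseHomotopy_of_mem]

end IsNDRPair

end

theorem stmt5_general {X : Type*} [TopologicalSpace X] (A : Set X)
    (u : C(X, I)) (h : C(X × I, X))
    (hu : u ⁻¹' {1} = A)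
    (hht : ∀ a ∈ A, ∀ t : I, h (a, t) = a)
    (hh0 : ∀ x : X, h (x, 0) = x)
    (hh1 : ∀ x : X, (0 : ℝ) < (u x : ℝ) → h (x, 1) ∈ A) :
    ∀ (Y : Type*) [TopologicalSpace Y] (f : C(X, Y)) (K : C(A × I, Y)),
      (∀ a : A, K (a, 0) = f a) →
      ∃ G : C(X × I, Y), (∀ x : X, G (x, 0) = f x) ∧
        ∀ (a : A) (t : I), G ((a : X), t) = K (a, t) := by
  intro Y _ f K hK0
  have hN : IsNDRPair A u h := ⟨hu, hht, hh0, hh1⟩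
  exact ⟨⟨ndrExtension u h f K, hN.continuous_ndrExtension f.continuous K.continuous hK0⟩,
    hN.ndrExtension_zero f K, hN.ndrExtension_of_mem hK0⟩

/-- If `(X, A)` admits a representation as an NDR-pair via `u : X → [0,1]` and a
homotopy `h : X × I → X` with `u⁻¹(1) = A`, `h_t|_A = id`, `h₀ = id`, and
`h₁(u⁻¹((0,1])) ⊆ A`, then the inclusion `A ↪ X` has the homotopy extension
property: any map `f : X → Y` together with a homotopy on `A` starting at `f|_A`
extends to a homotopy on all of `X` starting at `f`. -/
theorem stmt5 {X : Type*} [TopologicalSpace X] (A : Set X) (hA : IsClosed A)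
    (u : C(X, I)) (h : C(X × I, X))
    (hu : u ⁻¹' {1} = A)
    (hht : ∀ a ∈ A, ∀ t : I, h (a, t) = a)
    (hh0 : ∀ x : X, h (x, 0) = x)
    (hh1 : ∀ x : X, (0 : ℝ) < (u x : ℝ) → h (x, 1) ∈ A) :
    ∀ (Y : Type*) [TopologicalSpace Y] (f : C(X, Y)) (K : C(A × I, Y)),
      (∀ a : A, K (a, 0) = f a) →
      ∃ G : C(X × I, Y), (∀ x : X, G (x, 0) = f x) ∧
        ∀ (a : A) (t : I), G ((a : X), t) = K (a, t) :=
  stmt5_general A u h hu hht hh0 hh1
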